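/- Fix a real g > 0, a positive integer t, and positive integers a₁, …, a_t; set ω_j = a_j·g for j = 1, …, t, T = 2π/g, and for a positive integer M let t_i = T(i−1)/M for i = 1, …, M. Let p and φ be positive integers, assume M > (φ+1)·p·max(a₁, …, a_t), and let (m₁, …, m_t) and (m′₁, …, m′_t) be integer vectors with ∑_j |m_j| ≤ p, ∑_j |m′_j| ≤ φ·p and |∑_j m_j·a_j| ≠ |∑_j m′_j·a_j|. Then (2/M)·∑_{i=1}^{M} cos((∑_j m_j ω_j) t_i)·cos((∑_j m′_j ω_j) t_i) = 0 and (2/M)·∑_{i=1}^{M} sin((∑_j m_j ω_j) t_i)·sin((∑_j m′_j ω_j) t_i) = 0. -/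

import Mathlib

/-!
The frequency `∑ⱼ mⱼ ωⱼ` of a harmonic is the integer multiple `n g`, `n = ∑ⱼ mⱼ aⱼ`, of the
fundamental `g`, so on the nodes it becomes `2π n (i - 1) / M`. By the product-to-sum formulas
both aliasing sums are combinations of `∑ᵢ cos (2π k i / M)` with `k = n ± n'`, a geometric
sum of `M`-th roots of unity, which vanishes unless `M ∣ k`. The bounds on `m`, `m'` and `M`
give `|n| + |n'| < M`, and `|n| ≠ |n'|` gives `n ± n' ≠ 0`.
-/

open Real Finset

theorem sum_range_cos_two_pi_mul_div_eq_zero {M : ℕ} {k : ℤ} (hk : ¬ (M : ℤ) ∣ k) :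
    ∑ i ∈ range M, cos (2 * π * k * i / M) = 0 := by
  rcases M.eq_zero_or_pos with rfl | hM
  · simp
  replace hM : (M : ℂ) ≠ 0 := by exact_mod_cast hM.ne'
  set ζ : ℂ := Complex.exp (2 * π * Complex.I * k / M)
  have hζM : ζ ^ M = 1 := by
    rw [← Complex.exp_nat_mul, mul_div_cancel₀ _ hM, mul_comm, Complex.exp_int_mul_two_pi_mul_I]
  have hζ : ζ ≠ 1 := by
    rw [Ne, Complex.exp_eq_one_iff]
    rintro ⟨q, hq⟩
    refine hk ⟨q, ?_⟩
    have : (k : ℂ) = M * q := by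
      field_simp at hq
      linear_combination hq
    exact_mod_cast this
  have hre (i : ℕ) : cos (2 * π * k * i / M) = (ζ ^ i).re := by
    rw [← Complex.exp_nat_mul, ← Complex.exp_ofReal_mul_I_re]
    push_cast
    ring_nf
  simp_rw [hre, ← Complex.re_sum, geom_sum_eq hζ, hζM, sub_self, zero_div, Complex.zero_re]

theorem cos_mul_cos_eq_half_add (x y : ℝ) : cos x * cos y = (cos (x - y) + cos (x + y)) / 2 := by
  rw [cos_sub, cos_add]; ring

theorem sin_mul_sin_eq_half_sub (x y : ℝ) : sin x * sin y = (cos (x - y) - cos (x + y)) / 2 := by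
  rw [cos_sub, cos_add]; ring

section DiscreteOrthogonality

variable {M : ℕ} {n n' : ℤ}

theorem two_pi_mul_div_sub_and_add (i : ℕ) :
    (2 * π * n * i / M - 2 * π * n' * i / M = 2 * π * ((n - n' : ℤ) : ℝ) * i / M) ∧
    (2 * π * n * i / M + 2 * π * n' * i / M = 2 * π * ((n + n' : ℤ) : ℝ) * i / M) := by
  constructor <;> push_cast <;> ring

theorem sum_range_cos_mul_cos_eq_zero (hsub : ¬ (M : ℤ) ∣ n - n') (hadd : ¬ (M : ℤ) ∣ n + n') :
    ∑ i ∈ range M, cos (2 * π * n * i / M) * cos (2 * π * n' * i / M) = 0 := by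
  simp_rw [cos_mul_cos_eq_half_add, two_pi_mul_div_sub_and_add, ← sum_div, sum_add_distrib,
    sum_range_cos_two_pi_mul_div_eq_zero hsub, sum_range_cos_two_pi_mul_div_eq_zero hadd]
  norm_num

theorem sum_range_sin_mul_sin_eq_zero (hsub : ¬ (M : ℤ) ∣ n - n') (hadd : ¬ (M : ℤ) ∣ n + n') :
    ∑ i ∈ range M, sin (2 * π * n * i / M) * sin (2 * π * n' * i / M) = 0 := by
  simp_rw [sin_mul_sin_eq_half_sub, two_pi_mul_div_sub_and_add, ← sum_div, sum_sub_distrib,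
    sum_range_cos_two_pi_mul_div_eq_zero hsub, sum_range_cos_two_pi_mul_div_eq_zero hadd]
  norm_num

end DiscreteOrthogonality

theorem sum_Icc_one_cast_sub_one {β : Type*} [AddCommMonoid β] (M : ℕ) (f : ℝ → β) :
    ∑ i ∈ Icc 1 M, f ((i : ℝ) - 1) = ∑ i ∈ range M, f i := by
  rw [← Ico_add_one_right_eq_Icc, range_eq_Ico, ← sum_Ico_add' _ 0 M 1]
  simp

theorem abs_sum_mul_le_of_sum_natAbs_le {ι : Type*} {s : Finset ι} {v : ι → ℤ} (a : ι → ℕ)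
    {q : ℕ} (hv : ∑ j ∈ s, (v j).natAbs ≤ q) : |∑ j ∈ s, v j * a j| ≤ q * (s.sup a : ℕ) := by
  calc |∑ j ∈ s, v j * a j| ≤ ∑ j ∈ s, |v j * a j| := abs_sum_le_sum_abs _ _
    _ ≤ ∑ j ∈ s, ((v j).natAbs : ℤ) * (s.sup a : ℕ) := by
      gcongr with j hj
      rw [abs_mul, Int.abs_eq_natAbs, Nat.abs_cast]
      gcongr
      exact le_sup hj
    _ = (∑ j ∈ s, (v j).natAbs : ℕ) * (s.sup a : ℕ) := by push_cast [sum_mul]; rfl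
    _ ≤ q * (s.sup a : ℕ) := by gcongr

theorem not_dvd_of_abs_lt {M k : ℤ} (hk : k ≠ 0) (h : |k| < M) : ¬ M ∣ k :=
  fun hdvd => hk (Int.eq_zero_of_abs_lt_dvd hdvd h)

theorem sum_mul_freq_mul_node_eq {ι : Type*} [Fintype ι] {g : ℝ} (hg : g ≠ 0) (v : ι → ℤ)
    (a : ι → ℕ) (x M : ℝ) :
    (∑ j, (v j : ℝ) * ((a j : ℝ) * g)) * ((2 * π / g) * x / M) =
      2 * π * ((∑ j, v j * (a j : ℤ) : ℤ) : ℝ) * x / M := by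
  have hfreq : ∑ j, (v j : ℝ) * ((a j : ℝ) * g) = ((∑ j, v j * (a j : ℤ) : ℤ) : ℝ) * g := by
    push_cast
    simp_rw [sum_mul, mul_assoc]
  rw [hfreq]
  field_simp

theorem RMHB_multifreq_aliasing_vanish_general (g : ℝ) (hg : 0 < g)
    (t : ℕ) (a : Fin t → ℕ)
    (p φ M : ℕ)
    (hM : (φ + 1) * p * Finset.univ.sup a < M)
    (m m' : Fin t → ℤ)
    (hm : ∑ j, (m j).natAbs ≤ p) (hm' : ∑ j, (m' j).natAbs ≤ φ * p)
    (hne : |∑ j, m j * (a j : ℤ)| ≠ |∑ j, m' j * (a j : ℤ)|) :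
    (2 / (M : ℝ)) * ∑ i ∈ Finset.Icc 1 M,
        Real.cos ((∑ j, (m j : ℝ) * ((a j : ℝ) * g)) *
            ((2 * π / g) * ((i : ℝ) - 1) / M)) *
          Real.cos ((∑ j, (m' j : ℝ) * ((a j : ℝ) * g)) *
            ((2 * π / g) * ((i : ℝ) - 1) / M)) = 0 ∧
    (2 / (M : ℝ)) * ∑ i ∈ Finset.Icc 1 M,
        Real.sin ((∑ j, (m j : ℝ) * ((a j : ℝ) * g)) *
            ((2 * π / g) * ((i : ℝ) - 1) / M)) *
          Real.sin ((∑ j, (m' j : ℝ) * ((a j : ℝ) * g)) *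
            ((2 * π / g) * ((i : ℝ) - 1) / M)) = 0 := by
  simp_rw [sum_mul_freq_mul_node_eq hg.ne']
  generalize hn : ∑ j, m j * (a j : ℤ) = n at hne ⊢
  generalize hn' : ∑ j, m' j * (a j : ℤ) = n' at hne ⊢
  have hlt : |n| + |n'| < M := by
    calc |n| + |n'| ≤ p * (univ.sup a : ℕ) + (φ * p : ℕ) * (univ.sup a : ℕ) :=
          add_le_add (hn ▸ abs_sum_mul_le_of_sum_natAbs_le a hm)
            (hn' ▸ abs_sum_mul_le_of_sum_natAbs_le a hm')
      _ = ((φ + 1) * p * univ.sup a : ℕ) := by push_cast; ring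
      _ < M := by exact_mod_cast hM
  have hsub : ¬ (M : ℤ) ∣ n - n' :=
    not_dvd_of_abs_lt (fun h => hne (by rw [sub_eq_zero.1 h])) ((abs_sub _ _).trans_lt hlt)
  have hadd : ¬ (M : ℤ) ∣ n + n' :=
    not_dvd_of_abs_lt (fun h => hne (by rw [eq_neg_of_add_eq_zero_left h, abs_neg]))
      ((abs_add_le _ _).trans_lt hlt)
  rw [sum_Icc_one_cast_sub_one M fun x => cos (2 * π * n * x / M) * cos (2 * π * n' * x / M),
    sum_Icc_one_cast_sub_one M fun x => sin (2 * π * n * x / M) * sin (2 * π * n' * x / M),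
    sum_range_cos_mul_cos_eq_zero hsub hadd, sum_range_sin_mul_sin_eq_zero hsub hadd, mul_zero]
  exact ⟨rfl, rfl⟩

/-- Remark generalizing Theorem 2 to `t` base frequencies `ω_j = a_j g` with all
rational ratios: with sampling period `T = 2π/g`, nodes `t_i = T(i-1)/M`, and
`M > (φ+1) p max(a₁,…,a_t)`, aliasing between a retained harmonic
(`∑|m_j| ≤ p`) and a higher harmonic (`∑|m'_j| ≤ φ p`) of different absolute
frequency vanishes exactly. -/
theorem RMHB_multifreq_aliasing_vanish (g : ℝ) (hg : 0 < g)
    (t : ℕ) (ht : 0 < t) (a : Fin t → ℕ) (ha : ∀ j, 0 < a j)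
    (p φ M : ℕ) (hp : 0 < p) (hφ : 0 < φ)
    (hM : (φ + 1) * p * Finset.univ.sup a < M)
    (m m' : Fin t → ℤ)
    (hm : ∑ j, (m j).natAbs ≤ p) (hm' : ∑ j, (m' j).natAbs ≤ φ * p)
    (hne : |∑ j, m j * (a j : ℤ)| ≠ |∑ j, m' j * (a j : ℤ)|) :
    (2 / (M : ℝ)) * ∑ i ∈ Finset.Icc 1 M,
        Real.cos ((∑ j, (m j : ℝ) * ((a j : ℝ) * g)) *
            ((2 * π / g) * ((i : ℝ) - 1) / M)) *
          Real.cos ((∑ j, (m' j : ℝ) * ((a j : ℝ) * g)) *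
            ((2 * π / g) * ((i : ℝ) - 1) / M)) = 0 ∧
    (2 / (M : ℝ)) * ∑ i ∈ Finset.Icc 1 M,
        Real.sin ((∑ j, (m j : ℝ) * ((a j : ℝ) * g)) *
            ((2 * π / g) * ((i : ℝ) - 1) / M)) *
          Real.sin ((∑ j, (m' j : ℝ) * ((a j : ℝ) * g)) *
            ((2 * π / g) * ((i : ℝ) - 1) / M)) = 0 :=
  RMHB_multifreq_aliasing_vanish_general g hg t a p φ M hM m m' hm hm' hne
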